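/- Let a, b, c, d be nonnegative integers with b, d positive, gcd(a,b) = 1, gcd(c,d) = 1, and bc − ad = 1. Then every rational number x with a/b ≤ x ≤ c/d appears in the tree T(a/b, c/d). -/

import Mathlib

/-- The mediant of two rationals `p` and `q`: `(num p + num q) / (den p + den q)`. -/
def mediant (p q : ℚ) : ℚ := ((p.num + q.num : ℤ) : ℚ) / ((p.den + q.den : ℕ) : ℚ)

/-- Insert between every pair of consecutive entries of a list their mediant. -/
def insertMediants : List ℚ → List ℚ
  | [] => []
  | [p] => [p]
  | p :: q :: rest => p :: mediant p q :: insertMediants (q :: rest)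

/-- The sequences of the tree `T(r, s)`: `S r s 0 = [r, s]`, and each successive
sequence is obtained by inserting mediants between consecutive entries. -/
def S (r s : ℚ) : ℕ → List ℚ
  | 0 => [r, s]
  | n + 1 => insertMediants (S r s n)


/-!
Cut `[a/b, c/d]` at the mediant `(a+c)/(b+d)`; both halves again have cross determinant one,
and the tree `T(a/b, c/d)` is, one level down, the trees of the two halves glued at the mediant.
A rational `p/q` strictly inside the interval satisfies
`p + q = (pb - aq)(c + d) + (cq - pd)(a + b) ≥ a + b + c + d`,
so `p + q - (a + b + c + d)` strictly drops under each cut that keeps `p/q` in the interior,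
and after finitely many cuts `p/q` becomes an endpoint.
-/

lemma head?_insertMediants : ∀ l : List ℚ, (insertMediants l).head? = l.head?
  | [] | [_] | _ :: _ :: _ => rfl

lemma getLast?_insertMediants : ∀ l : List ℚ, (insertMediants l).getLast? = l.getLast?
  | [] | [_] => rfl
  | p :: q :: rest => by
    obtain ⟨l, hl⟩ := List.head?_eq_some_iff.1 (head?_insertMediants (q :: rest))
    rw [insertMediants, List.getLast?_cons_cons, hl, List.getLast?_cons_cons, ← hl,
      getLast?_insertMediants (q :: rest), List.getLast?_cons_cons]

lemma insertMediants_append_cons : ∀ (l₁ : List ℚ) (m : ℚ) (l₂ : List ℚ),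
    insertMediants (l₁ ++ m :: l₂) = insertMediants (l₁ ++ [m]) ++ (insertMediants (m :: l₂)).tail
  | [], _, [] | [], _, _ :: _ | [_], _, [] | [_], _, _ :: _ => rfl
  | p :: q :: l₁, m, l₂ => by
    simp only [List.cons_append, insertMediants]
    rw [← List.cons_append, insertMediants_append_cons (q :: l₁) m l₂, List.cons_append]

lemma head?_S (r s : ℚ) : ∀ n, (S r s n).head? = some r
  | 0 => rfl
  | n + 1 => by rw [S, head?_insertMediants, head?_S r s n]

lemma getLast?_S (r s : ℚ) : ∀ n, (S r s n).getLast? = some s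
  | 0 => rfl
  | n + 1 => by rw [S, getLast?_insertMediants, getLast?_S r s n]

lemma S_succ (r s : ℚ) : ∀ n,
    S r s (n + 1) = S r (mediant r s) n ++ (S (mediant r s) s n).tail
  | 0 => rfl
  | n + 1 => by
    obtain ⟨l₁, hl₁⟩ := List.getLast?_eq_some_iff.1 (getLast?_S r (mediant r s) n)
    obtain ⟨l₂, hl₂⟩ := List.head?_eq_some_iff.1 (head?_S (mediant r s) s n)
    rw [S, S_succ r s n, hl₁, hl₂, List.tail_cons, List.append_assoc, List.singleton_append,
      insertMediants_append_cons, ← hl₁, ← hl₂]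
    rfl

lemma mem_S_succ_of_mem_left {r s x : ℚ} {n : ℕ} (h : x ∈ S r (mediant r s) n) :
    x ∈ S r s (n + 1) := by
  rw [S_succ]
  exact List.mem_append_left _ h

lemma mem_S_succ_of_mem_right {r s x : ℚ} {n : ℕ} (h : x ∈ S (mediant r s) s n) :
    x ∈ S r s (n + 1) := by
  obtain ⟨l, hl⟩ := List.head?_eq_some_iff.1 (head?_S (mediant r s) s n)
  rw [S_succ, hl, List.tail_cons]
  rw [hl, List.mem_cons] at h
  rcases h with rfl | h
  · exact List.mem_append_left _ (List.mem_of_getLast? (getLast?_S r _ n))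
  · exact List.mem_append_right _ h

lemma coprime_of_det_eq_one {a b c d : ℕ} (hdet : (b : ℤ) * c - a * d = 1) :
    a.Coprime b ∧ c.Coprime d :=
  ⟨Nat.isCoprime_iff_coprime.1 ⟨-d, c, by linear_combination hdet⟩,
    Nat.isCoprime_iff_coprime.1 ⟨b, -a, by linear_combination hdet⟩⟩

lemma num_den_natCast_div {a b : ℕ} (hb : 0 < b) (hab : a.Coprime b) :
    ((a : ℚ) / b).num = a ∧ ((a : ℚ) / b).den = b := by
  have hb' : (0 : ℤ) < b := mod_cast hb
  have hab' : (a : ℤ).natAbs.Coprime (b : ℤ).natAbs := by simpa using hab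
  have hnum := Rat.num_div_eq_of_coprime hb' hab'
  have hden := Rat.den_div_eq_of_coprime hb' hab'
  push_cast at hnum hden
  exact ⟨hnum, mod_cast hden⟩

lemma mediant_natCast_div {a b c d : ℕ} (hb : 0 < b) (hd : 0 < d)
    (hab : a.Coprime b) (hcd : c.Coprime d) :
    mediant ((a : ℚ) / b) ((c : ℚ) / d) = ((a + c : ℕ) : ℚ) / ((b + d : ℕ) : ℚ) := by
  obtain ⟨hnum₁, hden₁⟩ := num_den_natCast_div hb hab
  obtain ⟨hnum₂, hden₂⟩ := num_den_natCast_div hd hcd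
  rw [mediant, hnum₁, hden₁, hnum₂, hden₂]
  push_cast
  rfl

lemma add_le_num_add_den {a b c d : ℕ} (hb : 0 < b) (hd : 0 < d)
    (hdet : (b : ℤ) * c - a * d = 1) {x : ℚ} (hx₁ : (a : ℚ) / b < x) (hx₂ : x < (c : ℚ) / d) :
    (a + b + c + d : ℤ) ≤ x.num + x.den := by
  have hq : (0 : ℚ) < x.den := mod_cast x.den_pos
  rw [← Rat.num_div_den x] at hx₁ hx₂
  rw [div_lt_div_iff₀ (mod_cast hb) hq] at hx₁
  rw [div_lt_div_iff₀ hq (mod_cast hd)] at hx₂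
  have hu : (a : ℤ) * x.den < x.num * b := by exact_mod_cast hx₁
  have hv : x.num * (d : ℤ) < c * x.den := by exact_mod_cast hx₂
  have hsum : x.num + x.den =
      (x.num * b - a * x.den) * (c + d) + (c * x.den - x.num * d) * (a + b) := by
    linear_combination (-(x.num + x.den)) * hdet
  nlinarith [Int.natCast_nonneg (c + d), Int.natCast_nonneg (a + b)]

lemma exists_mem_S_of_le_of_le {r s x : ℚ} (h₁ : r ≤ x) (h₂ : x ≤ s)
    (h : r < x → x < s → ∃ n, x ∈ S r s n) : ∃ n, x ∈ S r s n := by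
  rcases h₁.eq_or_lt with rfl | h₁
  · exact ⟨0, by simp [S]⟩
  rcases h₂.eq_or_lt with rfl | h₂
  · exact ⟨0, by simp [S]⟩
  exact h h₁ h₂

lemma exists_mem_S_of_num_add_den_lt (k : ℕ) {a b c d : ℕ} (hb : 0 < b) (hd : 0 < d)
    (hdet : (b : ℤ) * c - a * d = 1) {x : ℚ} (hx₁ : (a : ℚ) / b ≤ x) (hx₂ : x ≤ (c : ℚ) / d)
    (hk : x.num + x.den < a + b + c + d + k) :
    ∃ n, x ∈ S ((a : ℚ) / b) ((c : ℚ) / d) n := by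
  induction k generalizing a b c d with
  | zero =>
    refine exists_mem_S_of_le_of_le hx₁ hx₂ fun hx₁ hx₂ => ?_
    have := add_le_num_add_den hb hd hdet hx₁ hx₂
    omega
  | succ k ih =>
    obtain ⟨hab, hcd⟩ := coprime_of_det_eq_one hdet
    have hm := mediant_natCast_div hb hd hab hcd
    rcases le_total x (mediant ((a : ℚ) / b) ((c : ℚ) / d)) with hxm | hxm
    · obtain ⟨n, hn⟩ := ih hb (by omega) (by push_cast; linear_combination hdet) hx₁ (hm ▸ hxm)
        (by push_cast; omega)
      exact ⟨n + 1, mem_S_succ_of_mem_left (hm ▸ hn)⟩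
    · obtain ⟨n, hn⟩ := ih (by omega) hd (by push_cast; linear_combination hdet) (hm ▸ hxm) hx₂
        (by push_cast; omega)
      exact ⟨n + 1, mem_S_succ_of_mem_right (hm ▸ hn)⟩

theorem appears_of_crossDeterminant_one_general (a b c d : ℕ) (hb : 0 < b) (hd : 0 < d)
    (hdet : (b : ℤ) * c - a * d = 1)
    (x : ℚ) (hx1 : (a : ℚ) / b ≤ x) (hx2 : x ≤ (c : ℚ) / d) :
    ∃ n, x ∈ S ((a : ℚ) / b) ((c : ℚ) / d) n :=
  exists_mem_S_of_num_add_den_lt (x.num + x.den).toNat hb hd hdet hx1 hx2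
    (by have := Int.self_le_toNat (x.num + x.den); omega)

/-- If `a/b` and `c/d` are nonnegative fractions in lowest terms with `bc - ad = 1`,
then every rational `x` with `a/b ≤ x ≤ c/d` appears in the tree `T(a/b, c/d)`. -/
theorem appears_of_crossDeterminant_one (a b c d : ℕ) (hb : 0 < b) (hd : 0 < d)
    (hab : Nat.gcd a b = 1) (hcd : Nat.gcd c d = 1)
    (hdet : (b : ℤ) * c - a * d = 1)
    (x : ℚ) (hx1 : (a : ℚ) / b ≤ x) (hx2 : x ≤ (c : ℚ) / d) :
    ∃ n, x ∈ S ((a : ℚ) / b) ((c : ℚ) / d) n :=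
  appears_of_crossDeterminant_one_general a b c d hb hd hdet x hx1 hx2
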